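/- Let δ > 0 and 0 < q < 4 be real numbers. Then the polynomial φ₀(Z) = (1 + δ)Z³ − (3 + δ − (1 + δ)q)Z² + (3 − δ − (1 − δ)q)Z − (1 − δ) (the Debye–Young characteristic polynomial with α = 0, i.e. ε_s = ε_∞) is a simple von Neumann polynomial. -/

import Mathlib

/-! For `α = 0` the characteristic polynomial factors as
`((1 + δ) Z - (1 - δ)) · (Z² - (2 - q) Z + 1)`. The linear factor has its root
`(1 - δ) / (1 + δ)` strictly inside the unit disk. Since `|2 - q| < 2`, the quadratic has two
non-real roots, whose real part is `(2 - q) / 2` and whose modulus is `1`; they are simple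
because its discriminant `(2 - q)² - 4` does not vanish. A Schur factor times a simple von
Neumann factor is again simple von Neumann. -/

open Polynomial

/-- A Schur polynomial: all roots lie strictly inside the unit disk. -/
def IsSchur (p : Polynomial ℂ) : Prop :=
  ∀ z : ℂ, p.IsRoot z → ‖z‖ < 1

/-- A simple von Neumann polynomial: all roots lie in the closed unit disk and
every root on the unit circle is simple. -/
def IsSimpleVonNeumann (p : Polynomial ℂ) : Prop :=
  ∀ z : ℂ, p.IsRoot z → ‖z‖ ≤ 1 ∧
    (‖z‖ = 1 → Polynomial.rootMultiplicity z p = 1)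

theorem Polynomial.rootMultiplicity_eq_one_of_not_isRoot_derivative {K : Type*} [Field K]
    {p : K[X]} {t : K} (hp : p.IsRoot t) (hp' : ¬ (derivative p).IsRoot t) :
    p.rootMultiplicity t = 1 := by
  have hp0 : p ≠ 0 := by rintro rfl; simp at hp'
  have hpos := (rootMultiplicity_pos hp0).2 hp
  have hle := mt (one_lt_rootMultiplicity_iff_isRoot hp0).1 (fun h => hp' h.2)
  omega

theorem IsSchur.ne_zero {p : ℂ[X]} (hp : IsSchur p) : p ≠ 0 := by
  rintro rfl
  simpa using hp 1 (by simp)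

theorem IsSimpleVonNeumann.ne_zero {p : ℂ[X]} (hp : IsSimpleVonNeumann p) : p ≠ 0 := by
  rintro rfl
  have := (hp 2 (by simp)).1
  norm_num at this

theorem IsSchur.mul_isSimpleVonNeumann {p q : ℂ[X]} (hp : IsSchur p)
    (hq : IsSimpleVonNeumann q) : IsSimpleVonNeumann (p * q) := by
  intro z hz
  rcases root_mul.1 hz with hpz | hqz
  · have hz1 := hp z hpz
    exact ⟨hz1.le, fun h => absurd h hz1.ne⟩
  · refine ⟨(hq z hqz).1, fun hz1 => ?_⟩
    have hpz : ¬ p.IsRoot z := fun h => (hp z h).ne hz1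
    rw [rootMultiplicity_mul (mul_ne_zero hp.ne_zero hq.ne_zero),
      rootMultiplicity_eq_zero hpz, (hq z hqz).2 hz1, zero_add]

theorem isSchur_C_mul_X_sub_C {a c : ℂ} (hca : ‖c‖ < ‖a‖) : IsSchur (C a * X - C c) := by
  intro z hz
  have ha : a ≠ 0 := norm_pos_iff.1 ((norm_nonneg c).trans_lt hca)
  have hz' : a * z = c := by simpa [sub_eq_zero] using hz
  rw [← mul_lt_mul_iff_right₀ (norm_pos_iff.2 ha), mul_one, ← norm_mul, hz']
  exact hca

theorem norm_eq_one_of_sq_sub_mul_add_one_eq_zero {b : ℝ} (hb : |b| < 2) {z : ℂ}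
    (hz : z ^ 2 - b * z + 1 = 0) : ‖z‖ = 1 := by
  have hb2 : b ^ 2 < 4 := by nlinarith [abs_lt.1 hb]
  have hre := congrArg Complex.re hz
  have him := congrArg Complex.im hz
  simp only [Complex.add_re, Complex.sub_re, Complex.mul_re, Complex.ofReal_re,
    Complex.ofReal_im, pow_two, Complex.one_re, Complex.zero_re, Complex.add_im, Complex.sub_im,
    Complex.mul_im, Complex.one_im, Complex.zero_im, zero_mul, sub_zero, add_zero] at hre him
  have hy : z.im ≠ 0 := by
    intro hy
    rw [hy] at hre
    nlinarith [sq_nonneg (2 * z.re - b)]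
  have hx : 2 * z.re = b := by
    apply mul_right_cancel₀ hy
    linarith
  rw [Complex.norm_eq_sqrt_sq_add_sq, Real.sqrt_eq_one]
  linear_combination -hre + z.re * hx

theorem isSimpleVonNeumann_X_sq_sub_C_mul_X_add_one {b : ℝ} (hb : |b| < 2) :
    IsSimpleVonNeumann (X ^ 2 - C (b : ℂ) * X + 1) := by
  intro z hz
  have hz' : z ^ 2 - b * z + 1 = 0 := by simpa using hz
  refine ⟨(norm_eq_one_of_sq_sub_mul_add_one_eq_zero hb hz').le,
    fun _ => rootMultiplicity_eq_one_of_not_isRoot_derivative hz ?_⟩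
  intro hder
  have hz2 : 2 * z = b := by
    simpa [sub_eq_zero, one_add_one_eq_two] using hder
  have hdisc : ((4 - b ^ 2 : ℝ) : ℂ) = 0 := by
    push_cast
    linear_combination 4 * hz' - (2 * z - b) * hz2
  nlinarith [abs_lt.1 hb, Complex.ofReal_eq_zero.1 hdisc]

theorem debyeYoung_charPoly_eq_mul (δ q : ℝ) :
    Polynomial.C ((1 + δ : ℝ) : ℂ) * Polynomial.X ^ 3
      - Polynomial.C ((3 + δ - (1 + δ) * q : ℝ) : ℂ) * Polynomial.X ^ 2
      + Polynomial.C ((3 - δ - (1 - δ) * q : ℝ) : ℂ) * Polynomial.X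
      - Polynomial.C ((1 - δ : ℝ) : ℂ)
      = (C ((1 + δ : ℝ) : ℂ) * X - C ((1 - δ : ℝ) : ℂ)) *
        (X ^ 2 - C ((2 - q : ℝ) : ℂ) * X + 1) := by
  simp only [Complex.ofReal_add, Complex.ofReal_sub, Complex.ofReal_mul, Complex.ofReal_one,
    Complex.ofReal_ofNat, map_add, map_sub, map_mul, map_one, map_ofNat]
  ring

/-- Debye–Young with `ε_s = ε_∞` (α = 0): for `δ > 0` and `0 < q < 4` the
characteristic polynomial is a simple von Neumann polynomial. -/
theorem debye_young_vonNeumann_eps_eq (δ q : ℝ) (hδ : 0 < δ)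
    (hq0 : 0 < q) (hq4 : q < 4) :
    IsSimpleVonNeumann (Polynomial.C ((1 + δ : ℝ) : ℂ) * Polynomial.X ^ 3
      - Polynomial.C ((3 + δ - (1 + δ) * q : ℝ) : ℂ) * Polynomial.X ^ 2
      + Polynomial.C ((3 - δ - (1 - δ) * q : ℝ) : ℂ) * Polynomial.X
      - Polynomial.C ((1 - δ : ℝ) : ℂ)) := by
  rw [debyeYoung_charPoly_eq_mul]
  refine (isSchur_C_mul_X_sub_C ?_).mul_isSimpleVonNeumann
    (isSimpleVonNeumann_X_sq_sub_C_mul_X_add_one (abs_lt.2 ⟨by linarith, by linarith⟩))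
  rw [Complex.norm_real, Complex.norm_real, Real.norm_eq_abs, Real.norm_eq_abs,
    abs_of_pos (by linarith : (0 : ℝ) < 1 + δ)]
  exact abs_lt.2 ⟨by linarith, by linarith⟩
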